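/- Invariance of the moment matrix rank under affine linear transformations: Let β = (β_{i,j})_{i+j ≤ 2k} be a bivariate sequence with Riesz functional L_β, and let φ(x,y) = (a + bx + cy, d + ex + fy) with bf - ce ≠ 0. Define β̃_{i,j} = L_β(φ_1(x,y)^i φ_2(x,y)^j). Then M_k(β) is positive semidefinite if and only if M_k(β̃) is positive semidefinite, and rank M_k(β) = rank M_k(β̃). -/

import Mathlib

/-!
Substituting the affine map `φ` into polynomials does not raise the degree, so it acts on the
polynomials of degree `≤ k`; let `A` be its matrix in the monomial basis. Since the `(p, q)` entry
of `M_k(β̃)` is `L_β((x^p ∘ φ) (x^q ∘ φ))`, bilinearity gives `M_k(β̃) = Aᵀ M_k(β) A`. The matrix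
of a composite substitution is the product of the matrices, so `φ⁻¹` provides an inverse of `A`,
and congruence by an invertible matrix preserves both positive semidefiniteness and rank.
-/

open Matrix MeasureTheory

/-- Index set of bivariate monomials x^i y^j of total degree ≤ k. -/
def momIdx (k : ℕ) : Finset (ℕ × ℕ) :=
  (Finset.range (k+1) ×ˢ Finset.range (k+1)).filter (fun p => p.1 + p.2 ≤ k)

/-- The bivariate moment matrix M_k(β), indexed by monomials of total degree ≤ k. -/
def momMat (k : ℕ) (β : ℕ → ℕ → ℝ) : Matrix (momIdx k) (momIdx k) ℝ :=
  fun p q => β (p.1.1 + q.1.1) (p.1.2 + q.1.2)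

/-- The Riesz functional of a bivariate sequence β applied to a polynomial. -/
noncomputable def riesz (β : ℕ → ℕ → ℝ) (p : MvPolynomial (Fin 2) ℝ) : ℝ :=
  ∑ m ∈ p.support, p.coeff m * β (m 0) (m 1)

open MvPolynomial

lemma Matrix.posSemidef_transpose_mul_mul_iff {n R : Type*} [Fintype n] [DecidableEq n]
    [CommRing R] [PartialOrder R] [StarRing R] [TrivialStar R]
    {U : Matrix n n R} (hU : IsUnit U) (M : Matrix n n R) :
    (Uᵀ * M * U).PosSemidef ↔ M.PosSemidef := by
  rw [← conjTranspose_eq_transpose_of_trivial, ← star_eq_conjTranspose]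
  exact hU.posSemidef_star_left_conjugate_iff

lemma Matrix.rank_transpose_mul_mul_of_isUnit {n R : Type*} [Fintype n] [DecidableEq n]
    [CommRing R] {U : Matrix n n R} (hU : IsUnit U) (M : Matrix n n R) :
    (Uᵀ * M * U).rank = M.rank := by
  have hdet := (isUnit_iff_isUnit_det U).mp hU
  rw [rank_mul_eq_left_of_isUnit_det _ _ hdet,
    rank_mul_eq_right_of_isUnit_det _ _ (by rwa [det_transpose])]

lemma Matrix.of_bilin_sum_smul_eq_transpose_mul_mul {R M ι κ : Type*} [CommSemiring R]
    [AddCommMonoid M] [Module R M] [Fintype ι] (B : M →ₗ[R] M →ₗ[R] R) (v : ι → M)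
    (A : Matrix ι κ R) :
    Matrix.of (fun p q => B (∑ r, A r p • v r) (∑ s, A s q • v s)) =
      Aᵀ * Matrix.of (fun r s => B (v r) (v s)) * A := by
  ext p q
  simp only [of_apply, map_sum, map_smul, LinearMap.sum_apply, LinearMap.smul_apply, smul_eq_mul,
    mul_apply, transpose_apply, Finset.sum_mul, Finset.mul_sum]
  exact Finset.sum_congr rfl fun r _ => Finset.sum_congr rfl fun s _ => by ring

/-- The exponent vector of `x^i y^j`. -/
noncomputable def mexp : ℕ × ℕ ≃+ (Fin 2 →₀ ℕ) where
  toEquiv := (piFinTwoEquiv fun _ => ℕ).symm.trans Finsupp.equivFunOnFinite.symm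
  map_add' p q := by ext i; fin_cases i <;> rfl

@[simp] lemma mexp_apply_zero (p : ℕ × ℕ) : mexp p 0 = p.1 := rfl

@[simp] lemma mexp_apply_one (p : ℕ × ℕ) : mexp p 1 = p.2 := rfl

@[simp] lemma mexp_symm_apply (u : Fin 2 →₀ ℕ) : mexp.symm u = (u 0, u 1) := rfl

lemma monomial_mexp (p : ℕ × ℕ) :
    monomial (mexp p) (1 : ℝ) = X 0 ^ p.1 * X 1 ^ p.2 := by
  rw [X_pow_eq_monomial, X_pow_eq_monomial, monomial_mul, one_mul]
  congr 2
  ext i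
  fin_cases i <;> simp

lemma mem_momIdx {k : ℕ} {p : ℕ × ℕ} : p ∈ momIdx k ↔ p.1 + p.2 ≤ k := by
  simp only [momIdx, Finset.mem_filter, Finset.mem_product, Finset.mem_range]
  omega

noncomputable def rieszₗ (β : ℕ → ℕ → ℝ) : MvPolynomial (Fin 2) ℝ →ₗ[ℝ] ℝ :=
  (basisMonomials (Fin 2) ℝ).constr ℝ fun m => β (m 0) (m 1)

lemma coe_rieszₗ (β : ℕ → ℕ → ℝ) : ⇑(rieszₗ β) = riesz β := by
  ext P
  rw [rieszₗ, Module.Basis.constr_apply]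
  rfl

lemma riesz_monomial_mexp (β : ℕ → ℕ → ℝ) (r : ℕ × ℕ) (c : ℝ) :
    riesz β (monomial (mexp r) c) = c * β r.1 r.2 := by
  have hsmul : monomial (mexp r) c = c • basisMonomials (Fin 2) ℝ (mexp r) := by
    simp [smul_monomial]
  rw [← coe_rieszₗ, hsmul, map_smul, rieszₗ, Module.Basis.constr_basis, smul_eq_mul]
  rfl

lemma momMat_apply (k : ℕ) (β : ℕ → ℕ → ℝ) (p q : momIdx k) :
    momMat k β p q = riesz β (monomial (mexp p) 1 * monomial (mexp q) 1) := by
  rw [monomial_mul, ← map_add, riesz_monomial_mexp, mul_one, one_mul]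
  rfl

lemma eq_sum_momIdx_coeff_smul_monomial {k : ℕ} {P : MvPolynomial (Fin 2) ℝ}
    (hP : P.totalDegree ≤ k) :
    P = ∑ p : momIdx k, P.coeff (mexp p) • monomial (mexp p) (1 : ℝ) := by
  have hsupp : P.support ⊆ (momIdx k).map mexp.toEquiv.toEmbedding := by
    intro u hu
    refine Finset.mem_map_equiv.mpr (mem_momIdx.mpr ?_)
    simpa [Finsupp.sum_fintype, Fin.sum_univ_two] using (le_totalDegree hu).trans hP
  calc P = ∑ u ∈ P.support, monomial u (P.coeff u) := P.as_sum
    _ = ∑ u ∈ (momIdx k).map mexp.toEquiv.toEmbedding, monomial u (P.coeff u) :=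
        Finset.sum_subset hsupp fun u _ hu => by rw [notMem_support_iff.mp hu, monomial_zero]
    _ = ∑ p ∈ momIdx k, monomial (mexp p) (P.coeff (mexp p)) := Finset.sum_map _ _ _
    _ = _ := by rw [← Finset.sum_coe_sort]; simp [smul_monomial]

lemma totalDegree_bind₁_monomial_mexp_le {g : Fin 2 → MvPolynomial (Fin 2) ℝ}
    (hg : ∀ i, (g i).totalDegree ≤ 1) (p : ℕ × ℕ) :
    (bind₁ g (monomial (mexp p) 1)).totalDegree ≤ p.1 + p.2 := by
  rw [monomial_mexp, map_mul, map_pow, map_pow, bind₁_X_right, bind₁_X_right]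
  calc _ ≤ (g 0 ^ p.1).totalDegree + (g 1 ^ p.2).totalDegree := totalDegree_mul _ _
    _ ≤ p.1 * 1 + p.2 * 1 := by
        gcongr <;> exact (totalDegree_pow _ _).trans (Nat.mul_le_mul_left _ (hg _))
    _ = p.1 + p.2 := by ring

/-- Column `q` holds the coefficients of `x^q ∘ g` on the monomials of degree `≤ k`. This is the
matrix of the substitution `P ↦ P ∘ g` only when `g` has degree `≤ 1`; otherwise the columns are
truncated. -/
noncomputable def substMat (k : ℕ) (g : Fin 2 → MvPolynomial (Fin 2) ℝ) :
    Matrix (momIdx k) (momIdx k) ℝ :=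
  Matrix.of fun p q => (bind₁ g (monomial (mexp q) 1)).coeff (mexp p)

@[simp] lemma substMat_apply (k : ℕ) (g : Fin 2 → MvPolynomial (Fin 2) ℝ) (p q : momIdx k) :
    substMat k g p q = (bind₁ g (monomial (mexp q) 1)).coeff (mexp p) := rfl

lemma substMat_X (k : ℕ) : substMat k X = 1 := by
  ext p q
  rw [substMat_apply, bind₁_X_left, AlgHom.id_apply, coeff_monomial, one_apply]
  simp only [mexp.injective.eq_iff, Subtype.val_inj, eq_comm]

section Substitution

variable {k : ℕ} {g : Fin 2 → MvPolynomial (Fin 2) ℝ}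

lemma bind₁_monomial_mexp_eq_sum (hg : ∀ i, (g i).totalDegree ≤ 1) (q : momIdx k) :
    bind₁ g (monomial (mexp q) 1) = ∑ p : momIdx k, substMat k g p q • monomial (mexp p) 1 :=
  eq_sum_momIdx_coeff_smul_monomial
    ((totalDegree_bind₁_monomial_mexp_le hg q).trans (mem_momIdx.mp q.2))

lemma substMat_mul (hg : ∀ i, (g i).totalDegree ≤ 1) (h : Fin 2 → MvPolynomial (Fin 2) ℝ) :
    substMat k h * substMat k g = substMat k fun i => bind₁ h (g i) := by
  ext p q
  rw [mul_apply, substMat_apply, ← bind₁_bind₁, bind₁_monomial_mexp_eq_sum hg, map_sum,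
    coeff_sum]
  simp only [map_smul, coeff_smul, smul_eq_mul, substMat_apply, mul_comm]

lemma momMat_eq_transpose_mul_mul (hg : ∀ i, (g i).totalDegree ≤ 1) {β β' : ℕ → ℕ → ℝ}
    (hβ' : ∀ i j, β' i j = riesz β (g 0 ^ i * g 1 ^ j)) :
    momMat k β' = (substMat k g)ᵀ * momMat k β * substMat k g := by
  let B := (LinearMap.mul ℝ (MvPolynomial (Fin 2) ℝ)).compr₂ (rieszₗ β)
  have hM : momMat k β = Matrix.of fun r s : momIdx k =>
      B (monomial (mexp r) 1) (monomial (mexp s) 1) := by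
    ext r s
    simp [B, momMat_apply, coe_rieszₗ]
  rw [hM, ← of_bilin_sum_smul_eq_transpose_mul_mul]
  ext p q
  simp only [of_apply, B, LinearMap.compr₂_apply, LinearMap.mul_apply', coe_rieszₗ,
    ← bind₁_monomial_mexp_eq_sum hg]
  rw [← map_mul, monomial_mul, ← map_add, mul_one, monomial_mexp, map_mul, map_pow, map_pow,
    bind₁_X_right, bind₁_X_right, ← hβ']
  rfl

end Substitution

noncomputable def affineSubst (a b c d e f : ℝ) : Fin 2 → MvPolynomial (Fin 2) ℝ :=
  ![C a + C b * X 0 + C c * X 1, C d + C e * X 0 + C f * X 1]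

lemma totalDegree_C_add_C_mul_X_add_C_mul_X_le (a b c : ℝ) :
    (C a + C b * X 0 + C c * X 1 : MvPolynomial (Fin 2) ℝ).totalDegree ≤ 1 := by
  have hCX : ∀ (r : ℝ) (i : Fin 2), (C r * X i : MvPolynomial (Fin 2) ℝ).totalDegree ≤ 1 :=
    fun r i => (totalDegree_mul _ _).trans (by simp [totalDegree_C, totalDegree_X])
  refine (totalDegree_add _ _).trans (max_le ((totalDegree_add _ _).trans (max_le ?_ ?_)) ?_)
  · simp [totalDegree_C]
  · exact hCX b 0
  · exact hCX c 1

lemma totalDegree_affineSubst_le (a b c d e f : ℝ) (i : Fin 2) :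
    (affineSubst a b c d e f i).totalDegree ≤ 1 := by
  fin_cases i <;> exact totalDegree_C_add_C_mul_X_add_C_mul_X_le _ _ _

lemma exists_bind₁_affineSubst_eq_X (a b c d e f : ℝ) (hdet : b * f - c * e ≠ 0) :
    ∃ h : Fin 2 → MvPolynomial (Fin 2) ℝ, (fun i => bind₁ h (affineSubst a b c d e f i)) = X := by
  set D := b * f - c * e
  -- `φ⁻¹`, by Cramer's rule
  refine ⟨affineSubst ((c * d - f * a) / D) (f / D) (-c / D) ((e * a - b * d) / D) (-e / D)
    (b / D), funext fun i => MvPolynomial.funext fun x => ?_⟩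
  fin_cases i <;>
  · simp only [affineSubst, Fin.isValue, Fin.zero_eta, Fin.mk_one, cons_val_zero, cons_val_one,
      cons_val_fin_one, map_add, map_mul, algHom_C, algebraMap_eq, bind₁_X_right, eval_C, eval_X]
    field_simp
    ring

lemma isUnit_substMat_affineSubst (k : ℕ) (a b c d e f : ℝ) (hdet : b * f - c * e ≠ 0) :
    IsUnit (substMat k (affineSubst a b c d e f)) := by
  obtain ⟨h, hh⟩ := exists_bind₁_affineSubst_eq_X a b c d e f hdet
  refine IsUnit.of_mul_eq_one_right (substMat k h) ?_
  rw [substMat_mul (totalDegree_affineSubst_le a b c d e f), hh, substMat_X]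

theorem stmt14 (k : ℕ) (β : ℕ → ℕ → ℝ) (a b c d e f : ℝ) (hdet : b * f - c * e ≠ 0)
    (β' : ℕ → ℕ → ℝ)
    (hβ' : ∀ i j : ℕ, β' i j = riesz β
      ((MvPolynomial.C a + MvPolynomial.C b * MvPolynomial.X 0 +
          MvPolynomial.C c * MvPolynomial.X 1) ^ i *
       (MvPolynomial.C d + MvPolynomial.C e * MvPolynomial.X 0 +
          MvPolynomial.C f * MvPolynomial.X 1) ^ j)) :
    ((momMat k β).PosSemidef ↔ (momMat k β').PosSemidef) ∧
      (momMat k β).rank = (momMat k β').rank := by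
  have hA := isUnit_substMat_affineSubst k a b c d e f hdet
  rw [momMat_eq_transpose_mul_mul (totalDegree_affineSubst_le a b c d e f) hβ',
    posSemidef_transpose_mul_mul_iff hA, rank_transpose_mul_mul_of_isUnit hA]
  exact ⟨Iff.rfl, rfl⟩
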